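/- Let y(z) = ∏_{k=1}^n (z - ζ_k) with pairwise distinct ζ_k, let A be a monic polynomial of degree p+1 with simple roots disjoint from {ζ_1,...,ζ_n}, and let B, V be polynomials with deg B ≤ p, deg V ≤ p-1, such that A y'' + B y' = V y. Then for each k = 1, ..., n, the stationarity condition 2·∑_{j≠k} 1/(ζ_k - ζ_j) + B(ζ_k)/A(ζ_k) = 0 holds. -/

import Mathlib

/-!
Write `y = (X - ζₖ) q` with `q = ∏_{j ≠ k} (X - ζⱼ)`. Then `y'(ζₖ) = q(ζₖ)` and `y''(ζₖ) = 2 q'(ζₖ)`,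
while the logarithmic derivative of `q` at `ζₖ` is `∑_{j ≠ k} 1 / (ζₖ - ζⱼ)`. Hence
`y''(ζₖ) = 2 y'(ζₖ) ∑_{j ≠ k} 1 / (ζₖ - ζⱼ)`, and evaluating `A y'' + B y' = V y` at the root `ζₖ`
gives `y'(ζₖ) (2 A(ζₖ) ∑_{j ≠ k} 1 / (ζₖ - ζⱼ) + B(ζₖ)) = 0` with `y'(ζₖ) = q(ζₖ) ≠ 0`.
-/

open Polynomial Finset

namespace Polynomial

theorem eval_derivative_X_sub_C_mul {R : Type*} [CommRing R] (c : R) (q : R[X]) :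
    (derivative ((X - C c) * q)).eval c = q.eval c := by
  simp [derivative_mul]

theorem eval_derivative_derivative_X_sub_C_mul {R : Type*} [CommRing R] (c : R) (q : R[X]) :
    (derivative (derivative ((X - C c) * q))).eval c = 2 * (derivative q).eval c := by
  simp only [derivative_mul, derivative_sub, derivative_X, derivative_C, sub_zero, one_mul,
    derivative_add, eval_add, eval_mul, eval_sub, eval_X, eval_C, sub_self, zero_mul, add_zero]
  ring

variable {K ι : Type*} [Field K] [DecidableEq ι]

theorem eval_derivative_prod_X_sub_C {s : Finset ι} {f : ι → K} {x : K}
    (hx : ∀ i ∈ s, x ≠ f i) :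
    (derivative (∏ i ∈ s, (X - C (f i)))).eval x
      = (∏ i ∈ s, (x - f i)) * ∑ i ∈ s, 1 / (x - f i) := by
  simp only [derivative_prod_finset, derivative_X_sub_C, mul_one, eval_finsetSum, eval_prod,
    eval_sub, eval_X, eval_C, mul_sum]
  refine sum_congr rfl fun i hi => ?_
  rw [← mul_prod_erase s (fun j => x - f j) hi, mul_comm, ← mul_assoc,
    one_div_mul_cancel (sub_ne_zero.mpr (hx i hi)), one_mul]

variable [Fintype ι] {ζ : ι → K}

theorem eval_derivative_prod_X_sub_C_self (k : ι) :
    (derivative (∏ i, (X - C (ζ i)))).eval (ζ k) = ∏ j ∈ univ.erase k, (ζ k - ζ j) := by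
  rw [← mul_prod_erase univ _ (mem_univ k), eval_derivative_X_sub_C_mul]
  simp [eval_prod]

theorem eval_derivative_prod_X_sub_C_self_ne_zero (hζ : Function.Injective ζ) (k : ι) :
    (derivative (∏ i, (X - C (ζ i)))).eval (ζ k) ≠ 0 := by
  rw [eval_derivative_prod_X_sub_C_self]
  exact prod_ne_zero_iff.mpr fun j hj => sub_ne_zero.mpr (hζ.ne (ne_of_mem_erase hj).symm)

theorem eval_derivative_derivative_prod_X_sub_C_self (hζ : Function.Injective ζ) (k : ι) :
    (derivative (derivative (∏ i, (X - C (ζ i))))).eval (ζ k)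
      = 2 * (derivative (∏ i, (X - C (ζ i)))).eval (ζ k)
          * ∑ j ∈ univ.erase k, 1 / (ζ k - ζ j) := by
  rw [eval_derivative_prod_X_sub_C_self, ← mul_prod_erase univ _ (mem_univ k),
    eval_derivative_derivative_X_sub_C_mul,
    eval_derivative_prod_X_sub_C fun j hj => hζ.ne (ne_of_mem_erase hj).symm, mul_assoc]

end Polynomial

theorem stmt_5_general (p n : ℕ) (a : Fin (p + 1) → ℂ)
    (ζ : Fin n → ℂ) (hζ : Function.Injective ζ) (hζa : ∀ k m, ζ k ≠ a m)
    (A B V : Polynomial ℂ) (hA : A = ∏ i, (Polynomial.X - Polynomial.C (a i)))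
    (heq : A * Polynomial.derivative
        (Polynomial.derivative (∏ k, (Polynomial.X - Polynomial.C (ζ k))))
        + B * Polynomial.derivative (∏ k, (Polynomial.X - Polynomial.C (ζ k)))
      = V * ∏ k, (Polynomial.X - Polynomial.C (ζ k))) :
    ∀ k : Fin n,
      2 * ∑ j ∈ Finset.univ.erase k, 1 / (ζ k - ζ j)
        + B.eval (ζ k) / A.eval (ζ k) = 0 := by
  intro k
  have hA_ne : A.eval (ζ k) ≠ 0 := by
    simpa [hA, eval_prod, prod_ne_zero_iff, sub_eq_zero] using hζa k
  have hy : (∏ i, (X - C (ζ i))).eval (ζ k) = 0 := by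
    simpa [eval_prod] using prod_eq_zero (mem_univ k) (sub_self (ζ k))
  have heq_k := congrArg (eval (ζ k)) heq
  rw [eval_add, eval_mul, eval_mul, eval_mul, hy, mul_zero,
    eval_derivative_derivative_prod_X_sub_C_self hζ] at heq_k
  have hy' := eval_derivative_prod_X_sub_C_self_ne_zero hζ k
  have hstationary : A.eval (ζ k) * (2 * ∑ j ∈ univ.erase k, 1 / (ζ k - ζ j)) + B.eval (ζ k) = 0 :=
    (mul_eq_zero.mp (by linear_combination heq_k)).resolve_left hy'
  field_simp
  linear_combination hstationary

theorem stmt_5 (p n : ℕ) (a : Fin (p + 1) → ℂ) (ha : Function.Injective a)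
    (ζ : Fin n → ℂ) (hζ : Function.Injective ζ) (hζa : ∀ k m, ζ k ≠ a m)
    (A B V : Polynomial ℂ) (hA : A = ∏ i, (Polynomial.X - Polynomial.C (a i)))
    (hB : B.degree ≤ p) (hV : V.degree ≤ (p - 1 : ℕ))
    (heq : A * Polynomial.derivative
        (Polynomial.derivative (∏ k, (Polynomial.X - Polynomial.C (ζ k))))
        + B * Polynomial.derivative (∏ k, (Polynomial.X - Polynomial.C (ζ k)))
      = V * ∏ k, (Polynomial.X - Polynomial.C (ζ k))) :
    ∀ k : Fin n,
      2 * ∑ j ∈ Finset.univ.erase k, 1 / (ζ k - ζ j)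
        + B.eval (ζ k) / A.eval (ζ k) = 0 :=
  stmt_5_general p n a ζ hζ hζa A B V hA heq
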